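/- Let (M, φ) be a 7-manifold with closed G₂-structure and let α, β be Rochesterian 1-forms with Rochesterian vector fields X_α, X_β. Then the bracket {α, β} := φ(X_α, X_β, ·) is again a Rochesterian 1-form, and its Rochesterian vector field is [X_β, X_α]; that is, d({α, β}) = [X_β, X_α] ⌟ φ. -/

import Mathlib

/-!
Since Mathlib does not yet provide differential forms, exterior derivatives, interior
products or Lie derivatives on smooth manifolds, we axiomatize a smooth manifold together
with its Cartan calculus as a structure `DGCtx`: it records the points of the manifold,
the smooth vector fields (a Lie algebra), the smooth differential `k`-forms, the exterior
derivative `d`, the interior product `ι`, and the standard identities relating them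
(Cartan's magic formula is used to express the Lie derivative).
-/

/-- An abstract smooth manifold together with its Cartan calculus. -/
structure DGCtx : Type 1 where
  /-- the points of the manifold `M` -/
  Pt : Type
  /-- the smooth vector fields on `M`, a Lie algebra over `ℝ` -/
  VF : Type
  /-- the smooth differential `k`-forms on `M`; `Form 0 = C^∞(M)` -/
  Form : ℕ → Type
  [instVFLieRing : LieRing VF]
  [instVFLieAlg : LieAlgebra ℝ VF]
  [instFormAddCommGroup : ∀ k, AddCommGroup (Form k)]
  [instFormModule : ∀ k, Module ℝ (Form k)]
  /-- evaluation of a smooth function at a point -/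
  eval : Form 0 → Pt → ℝ
  eval_injective : Function.Injective eval
  eval_zero : ∀ p : Pt, eval 0 p = 0
  /-- the exterior derivative -/
  d : ∀ {k : ℕ}, Form k → Form (k + 1)
  d_add : ∀ {k : ℕ} (α β : Form k), d (α + β) = d α + d β
  d_smul : ∀ {k : ℕ} (c : ℝ) (α : Form k), d (c • α) = c • d α
  d_d : ∀ {k : ℕ} (α : Form k), d (d α) = 0
  /-- the interior product (contraction) `ι X α = X ⌟ α` -/
  ι : ∀ {k : ℕ}, VF → Form (k + 1) → Form k
  ι_add : ∀ {k : ℕ} (X : VF) (α β : Form (k + 1)), ι X (α + β) = ι X α + ι X β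
  ι_smul : ∀ {k : ℕ} (c : ℝ) (X : VF) (α : Form (k + 1)), ι X (c • α) = c • ι X α
  ι_add_vf : ∀ {k : ℕ} (X Y : VF) (α : Form (k + 1)), ι (X + Y) α = ι X α + ι Y α
  ι_smul_vf : ∀ {k : ℕ} (c : ℝ) (X : VF) (α : Form (k + 1)), ι (c • X) α = c • ι X α
  ι_antisymm : ∀ {k : ℕ} (X Y : VF) (α : Form (k + 2)), ι X (ι Y α) = - ι Y (ι X α)
  /-- vector fields are determined by their derivations on smooth functions -/
  vf_ext : ∀ X Y : VF, (∀ f : Form 0, ι X (d f) = ι Y (d f)) → X = Y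
  /-- `ι_{[X,Y]} = L_X ∘ ι_Y - ι_Y ∘ L_X`, the Lie derivative being expressed by
  Cartan's magic formula `L_X = d ∘ ι_X + ι_X ∘ d`. -/
  ι_bracket : ∀ {k : ℕ} (X Y : VF) (α : Form (k + 2)),
    ι ⁅X, Y⁆ α = (d (ι X (ι Y α)) + ι X (d (ι Y α))) - ι Y (d (ι X α) + ι X (d α))
  /-- the same identity one degree lower, where `ι_Y α` is a function and
  `L_X` acts on functions as `ι_X ∘ d`. -/
  ι_bracket₀ : ∀ (X Y : VF) (α : Form 1),
    ι ⁅X, Y⁆ α = ι X (d (ι Y α)) - ι Y (d (ι X α) + ι X (d α))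

attribute [instance] DGCtx.instVFLieRing DGCtx.instVFLieAlg
  DGCtx.instFormAddCommGroup DGCtx.instFormModule

namespace DGCtx

variable (C : DGCtx)

/-- The Lie derivative `L_X` on `(k+1)`-forms, via Cartan's magic formula. -/
def lieD {k : ℕ} (X : C.VF) (α : C.Form (k + 1)) : C.Form (k + 1) :=
  C.d (C.ι X α) + C.ι X (C.d α)

/-- The Lie derivative `L_X` on smooth functions. -/
def lieF (X : C.VF) (f : C.Form 0) : C.Form 0 := C.ι X (C.d f)

end DGCtx

/-- A symplectic structure on the manifold `C`: a closed nondegenerate 2-form.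
(Nondegeneracy is recorded through its consequence that contraction with `ω` is an
injective map from vector fields to 1-forms.) -/
structure SymplData (C : DGCtx) where
  /-- the symplectic form -/
  ω : C.Form 2
  closed : C.d ω = 0
  nondeg : ∀ X Y : C.VF, C.ι X ω = C.ι Y ω → X = Y

namespace SymplData

variable {C : DGCtx} (S : SymplData C)

/-- A vector field is symplectic if its flow preserves `ω`, i.e. `L_X ω = 0`. -/
def IsSympVF (X : C.VF) : Prop := C.lieD (k := 1) X S.ω = 0

/-- A vector field is Hamiltonian if `X ⌟ ω = d H` for some smooth function `H`. -/
def IsHamVF (X : C.VF) : Prop := ∃ H : C.Form 0, C.ι X S.ω = C.d H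

end SymplData

/-- A symplectic structure together with the assignment `f ↦ X_f` of the (unique, by
nondegeneracy) Hamiltonian vector field of each smooth function; these exist on any
symplectic manifold since `ω` induces an isomorphism between vector fields and 1-forms.
`ham_span` records that Hamiltonian vector fields span each tangent space. -/
structure HamSympl (C : DGCtx) extends SymplData C where
  /-- the Hamiltonian vector field `X_f` of a smooth function `f` -/
  ham : C.Form 0 → C.VF
  ham_spec : ∀ f : C.Form 0, C.ι (ham f) ω = C.d f
  ham_span : ∀ β : C.Form 2, (∀ f : C.Form 0, C.ι (ham f) β = 0) → β = 0

namespace HamSympl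

variable {C : DGCtx} (S : HamSympl C)

/-- The Poisson bracket `{f, g} = ω(X_f, X_g)`. -/
def pb (f g : C.Form 0) : C.Form 0 := C.ι (S.ham g) (C.ι (S.ham f) S.ω)

end HamSympl

/-- A `G₂`-structure on the 7-manifold `C`: the fundamental (nondegenerate) 3-form `φ`.
(Nondegeneracy is recorded through its consequence that contraction with `φ` is an
injective map from vector fields to 2-forms.) -/
structure G2Data (C : DGCtx) where
  /-- the fundamental 3-form of the `G₂`-structure -/
  φ : C.Form 3
  nondeg : ∀ X Y : C.VF, C.ι X φ = C.ι Y φ → X = Y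

namespace G2Data

variable {C : DGCtx} (G : G2Data C)

/-- `Ω²₇(M) = {X ⌟ φ : X a vector field}`, the 7-dimensional component of the 2-forms. -/
def Omega27 : Set (C.Form 2) := Set.range fun X : C.VF => C.ι X G.φ

/-- A `G₂`-vector field: one whose flow preserves `φ`, i.e. `L_X φ = 0`. -/
def IsG2VF (X : C.VF) : Prop := C.lieD (k := 2) X G.φ = 0

/-- A Rochesterian vector field: `X ⌟ φ = d α` for some 1-form `α` (such an `α` is
automatically a Rochesterian 1-form since `d α = X ⌟ φ ∈ Ω²₇`). -/
def IsRocVF (X : C.VF) : Prop := ∃ α : C.Form 1, C.ι X G.φ = C.d α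

/-- A Rochesterian 1-form: a 1-form `α` with `d α ∈ Ω²₇(M)`. -/
def IsRoc1 (α : C.Form 1) : Prop := C.d α ∈ G.Omega27

/-- The Rochesterian vector field `X_α` of a Rochesterian 1-form `α`: the unique (by
nondegeneracy) vector field with `X_α ⌟ φ = d α`; junk value `0` otherwise. -/
noncomputable def rvf (α : C.Form 1) : C.VF :=
  letI := Classical.propDecidable (∃ X : C.VF, C.ι X G.φ = C.d α)
  if h : ∃ X : C.VF, C.ι X G.φ = C.d α then h.choose else 0

/-- The bracket `{α, β} = φ(X_α, X_β, ·)` on Rochesterian 1-forms. -/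
noncomputable def rbr (α β : C.Form 1) : C.Form 1 :=
  C.ι (G.rvf β) (C.ι (G.rvf α) G.φ)

end G2Data

/-- The pullback data of a smooth map `ψ : C → D`: pullback of forms, commuting
with `d` and `ℝ`-linear. -/
structure SmoothPull (C D : DGCtx) where
  /-- pullback of forms, `ψ^*` -/
  pull : ∀ {k : ℕ}, D.Form k → C.Form k
  pull_add : ∀ {k : ℕ} (α β : D.Form k), pull (α + β) = pull α + pull β
  pull_smul : ∀ {k : ℕ} (c : ℝ) (α : D.Form k), pull (c • α) = c • pull α
  pull_d : ∀ {k : ℕ} (α : D.Form k), pull (D.d α) = C.d (pull α)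

/-- The pullback data of a diffeomorphism `ψ : C → D`: in addition to the pullback of
forms, vector fields pull back by `X ↦ dψ⁻¹ ∘ X ∘ ψ`, pullbacks are bijective, and the
pullback is compatible with the interior product: `ψ^*(X ⌟ α) = (ψ^* X) ⌟ (ψ^* α)`. -/
structure DiffeoPull (C D : DGCtx) extends SmoothPull C D where
  /-- pullback of vector fields under the diffeomorphism, `X ↦ dψ⁻¹ ∘ X ∘ ψ` -/
  pullVF : D.VF → C.VF
  pullVF_bijective : Function.Bijective pullVF
  pull_bijective : ∀ k : ℕ, Function.Bijective fun α : D.Form k => pull α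
  pull_ι : ∀ {k : ℕ} (X : D.VF) (α : D.Form (k + 1)),
    pull (D.ι X α) = C.ι (pullVF X) (pull α)

/-- A closed (compact, boundaryless) 7-manifold with `G₂`-structure `φ`: in addition to
the `G₂` 3-form we record the wedge product (in the degrees needed), the induced metric
`⟨·,·⟩_φ` and volume form via `(X ⌟ φ) ∧ (Y ⌟ φ) ∧ φ = 6 ⟨X,Y⟩_φ dvol_φ`, and integration
of 7-forms, for which Stokes' theorem `∫_M dη = ∫_{∂M} η = 0` holds since `∂M = ∅`. -/
structure ClosedManifoldG2 (C : DGCtx) extends G2Data C where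
  /-- the wedge product of forms -/
  wedge : ∀ {k l : ℕ}, C.Form k → C.Form l → C.Form (k + l)
  wedge_zero_left : ∀ {k l : ℕ} (β : C.Form l), wedge (0 : C.Form k) β = 0
  wedge_zero_right : ∀ {k l : ℕ} (α : C.Form k), wedge α (0 : C.Form l) = 0
  wedge_assoc₂₂₃ : ∀ (α β : C.Form 2) (γ : C.Form 3),
    wedge (wedge α β) γ = wedge α (wedge β γ)
  d_wedge₁₅ : ∀ (α : C.Form 1) (β : C.Form 5),
    C.d (wedge α β) = wedge (C.d α) β - wedge α (C.d β)
  d_wedge₂₃ : ∀ (α : C.Form 2) (β : C.Form 3),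
    C.d (wedge α β) = wedge (C.d α) β + wedge α (C.d β)
  /-- the `G₂`-metric `⟨X, Y⟩_φ`, as a smooth function -/
  inner : C.VF → C.VF → C.Form 0
  /-- the volume form `dvol_φ` of the `G₂`-metric -/
  vol : C.Form 7
  /-- multiplication of a 7-form by a smooth function -/
  fmul : C.Form 0 → C.Form 7 → C.Form 7
  fmul_smul : ∀ (c : ℝ) (f : C.Form 0) (η : C.Form 7), fmul (c • f) η = c • fmul f η
  /-- the defining identity of the `G₂`-metric:
  `(X ⌟ φ) ∧ (Y ⌟ φ) ∧ φ = 6 ⟨X,Y⟩_φ dvol_φ` -/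
  g2_metric : ∀ X Y : C.VF,
    wedge (wedge (C.ι X φ) (C.ι Y φ)) φ = fmul ((6 : ℝ) • inner X Y) vol
  /-- integration of 7-forms over `M` -/
  integral : C.Form 7 → ℝ
  integral_smul : ∀ (c : ℝ) (η : C.Form 7), integral (c • η) = c * integral η
  /-- Stokes' theorem on the closed manifold `M`: `∫_M dη = 0` -/
  stokes : ∀ η : C.Form 6, integral (C.d η) = 0
  /-- `∫_M ⟨X,X⟩_φ dvol_φ ≥ 0` (it is `6⁻¹` of the square of the `L²`-norm of `X`) -/
  inner_self_integral_nonneg : ∀ X : C.VF, 0 ≤ integral (fmul (inner X X) vol)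
  /-- `∫_M ⟨X,X⟩_φ dvol_φ = 0` forces `X = 0`, by positive-definiteness of the metric -/
  inner_self_integral_eq_zero : ∀ X : C.VF, integral (fmul (inner X X) vol) = 0 → X = 0

/-!
Cartan's identity `ι_{[X,Y]} = L_X ∘ ι_Y - ι_Y ∘ L_X`, applied to `φ` with `X = X_β`,
`Y = X_α`: since `φ`, `X_α ⌟ φ = dα` and `X_β ⌟ φ = dβ` are all closed, every term except
`d(X_β ⌟ X_α ⌟ φ) = d{α, β}` vanishes.
-/

namespace DGCtx

variable (C : DGCtx)

@[simp]
theorem ι_zero {k : ℕ} (X : C.VF) : C.ι X (0 : C.Form (k + 1)) = 0 := by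
  simpa using C.ι_smul 0 X 0

variable {C}

theorem ι_bracket_eq_d_ι_ι {k : ℕ} {X Y : C.VF} {φ : C.Form (k + 2)} (hφ : C.d φ = 0)
    (hX : C.d (C.ι X φ) = 0) (hY : C.d (C.ι Y φ) = 0) :
    C.ι ⁅X, Y⁆ φ = C.d (C.ι X (C.ι Y φ)) := by
  rw [C.ι_bracket, hφ, hX, hY]
  simp

end DGCtx

namespace G2Data

variable {C : DGCtx} (G : G2Data C)

theorem ι_rvf {α : C.Form 1} (hα : G.IsRoc1 α) : C.ι (G.rvf α) G.φ = C.d α := by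
  have h : ∃ X : C.VF, C.ι X G.φ = C.d α := hα
  rw [rvf, dif_pos h]
  exact h.choose_spec

theorem rvf_eq_of_ι_eq {α : C.Form 1} {X : C.VF} (hX : C.ι X G.φ = C.d α) : G.rvf α = X :=
  G.nondeg _ _ ((G.ι_rvf ⟨X, hX⟩).trans hX.symm)

end G2Data

/-- Let `(M, φ)` be a 7-manifold with closed `G₂`-structure and `α, β`
Rochesterian 1-forms with Rochesterian vector fields `X_α, X_β`.  Then the bracket
`{α, β} = φ(X_α, X_β, ·)` is again a Rochesterian 1-form, and its Rochesterian vector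
field is `[X_β, X_α]`; that is, `d({α, β}) = [X_β, X_α] ⌟ φ`. -/
theorem rochesterian_bracket_is_rochesterian
    (C : DGCtx) (G : G2Data C) (hφ : C.d G.φ = 0)
    (α β : C.Form 1) (hα : G.IsRoc1 α) (hβ : G.IsRoc1 β) :
    G.IsRoc1 (G.rbr α β) ∧
    C.d (G.rbr α β) = C.ι ⁅G.rvf β, G.rvf α⁆ G.φ ∧
    G.rvf (G.rbr α β) = ⁅G.rvf β, G.rvf α⁆ := by
  have hXβ : C.d (C.ι (G.rvf β) G.φ) = 0 := by rw [G.ι_rvf hβ, C.d_d]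
  have hXα : C.d (C.ι (G.rvf α) G.φ) = 0 := by rw [G.ι_rvf hα, C.d_d]
  have key : C.ι ⁅G.rvf β, G.rvf α⁆ G.φ = C.d (G.rbr α β) :=
    C.ι_bracket_eq_d_ι_ι hφ hXβ hXα
  exact ⟨⟨_, key⟩, key.symm, G.rvf_eq_of_ι_eq key⟩
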